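/- Fix x ∈ S(m,L,w) and m₀ ≤ m. Let S̃ be the set of binary words of length mL whose first m₀ subblocks have weight at least w−1 and whose remaining subblocks have weight at least w. For nonnegative integers t₁, t₂ with t₁ + t₂ ≤ t, the number of y ∈ S̃ at Hamming distance at most t from x such that each subblock of y differs from the corresponding subblock of x in at most one position is at least Σ_{t₁+t₂≤t} C(m₀,t₁)·C(m−m₀,t₂)·L^{t₁}·(L−w)^{t₂}. -/

import Mathlib

open Finset

/-- The Hamming weight of a length-`L` binary subblock. -/
def wt {L : ℕ} (b : Fin L → Bool) : ℕ :=
  (Finset.univ.filter (fun j => b j = true)).card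

/-- Hamming distance between two binary words of length `mL`, given as `m`
subblocks of length `L`. -/
def hdist {m L : ℕ} (x y : Fin m → Fin L → Bool) : ℕ :=
  ∑ i, hammingDist (x i) (y i)

/-! Every block of `y` either equals the corresponding block of `x` or differs from it by one bit
flip. In the first `m₀` blocks all `L` flips are allowed; in the others only flips keeping the
weight `≥ w`, of which there are at least `L - w` (all `L` if the weight exceeds `w`, otherwise the
`L - w` flips of a `0`). The words whose set of changed blocks is `S` form a product set with
`∏_{i ∈ S}` (number of allowed flips) elements, and these sets are disjoint for distinct `S`.
Taking `S = A ∪ B` with `A` among the first `m₀` blocks, `B` among the others and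
`|A| + |B| ≤ t`, and counting the pairs `(A, B)` by their sizes, gives the bound. -/

section ChangeOn

variable {ι : Type*} [Fintype ι] [DecidableEq ι] {α : ι → Type*}

def changeOn (x : ∀ i, α i) (N : ∀ i, Finset (α i)) (S : Finset ι) : Finset (∀ i, α i) :=
  Fintype.piFinset fun i => if i ∈ S then N i else {x i}

variable {x : ∀ i, α i} {N : ∀ i, Finset (α i)} {S : Finset ι} {y : ∀ i, α i}

lemma mem_changeOn : y ∈ changeOn x N S ↔ ∀ i, (i ∈ S → y i ∈ N i) ∧ (i ∉ S → y i = x i) := by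
  simp only [changeOn, Fintype.mem_piFinset]
  refine forall_congr' fun i => ?_
  by_cases hi : i ∈ S <;> simp [hi]

lemma card_changeOn : #(changeOn x N S) = ∏ i ∈ S, #(N i) := by
  simp [changeOn, Fintype.card_piFinset, apply_ite card, prod_ite_mem]

lemma filter_ne_eq_of_mem_changeOn [∀ i, DecidableEq (α i)] (hN : ∀ i, x i ∉ N i)
    (hy : y ∈ changeOn x N S) :
    ({i | y i ≠ x i} : Finset ι) = S := by
  ext i
  obtain ⟨hS, hSc⟩ := mem_changeOn.1 hy i
  by_cases hi : i ∈ S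
  · simpa [hi] using fun h : y i = x i => hN i (h ▸ hS hi)
  · simp [hi, hSc hi]

lemma sum_prod_card_le_card [∀ i, DecidableEq (α i)] (hN : ∀ i, x i ∉ N i)
    {𝒮 : Finset (Finset ι)} {T : Finset (∀ i, α i)} (hT : ∀ S ∈ 𝒮, changeOn x N S ⊆ T) :
    ∑ S ∈ 𝒮, ∏ i ∈ S, #(N i) ≤ #T := by
  have hdisj : (𝒮 : Set (Finset ι)).PairwiseDisjoint (changeOn x N) := by
    intro S _ S' _ hne
    refine disjoint_left.2 fun y hy hy' => hne ?_
    rw [← filter_ne_eq_of_mem_changeOn hN hy, ← filter_ne_eq_of_mem_changeOn hN hy']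
  calc ∑ S ∈ 𝒮, ∏ i ∈ S, #(N i) = #(𝒮.biUnion (changeOn x N)) := by
        simp_rw [card_biUnion hdisj, card_changeOn]
    _ ≤ #T := card_le_card (biUnion_subset.2 hT)

end ChangeOn

section SplitSubsets

variable {ι : Type*}

lemma injOn_union_powerset_product [DecidableEq ι] {P Q : Finset ι} (h : Disjoint P Q) :
    Set.InjOn (fun AB : Finset ι × Finset ι => AB.1 ∪ AB.2) ↑(P.powerset ×ˢ Q.powerset) := by
  have key : ∀ A B, A ⊆ P → B ⊆ Q → (A ∪ B) ∩ P = A ∧ (A ∪ B) ∩ Q = B := fun A B hA hB =>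
    ⟨by grind [disjoint_left], by grind [disjoint_left]⟩
  rintro ⟨A, B⟩ hAB ⟨A', B'⟩ hAB' hunion
  simp only [coe_product, Set.mem_prod, mem_coe, mem_powerset] at hAB hAB'
  have := key A B hAB.1 hAB.2
  have := key A' B' hAB'.1 hAB'.2
  simp_all

lemma sum_choose_mul_choose_mul_pow_mul_pow (P Q : Finset ι) (t a b : ℕ) :
    ∑ t₁ ∈ range (t + 1), ∑ t₂ ∈ range (t + 1 - t₁),
        (#P).choose t₁ * (#Q).choose t₂ * a ^ t₁ * b ^ t₂ =
      ∑ AB ∈ P.powerset ×ˢ Q.powerset with #AB.1 + #AB.2 ≤ t, a ^ #AB.1 * b ^ #AB.2 := by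
  rw [← sum_fiberwise_of_maps_to (g := fun AB : Finset ι × Finset ι => #AB.1) (t := range (t + 1))
    (fun AB h => by simp only [mem_filter] at h; simp only [mem_range]; omega)]
  refine sum_congr rfl fun t₁ ht₁ => ?_
  rw [← sum_fiberwise_of_maps_to (g := fun AB : Finset ι × Finset ι => #AB.2)
    (t := range (t + 1 - t₁))
    (fun AB h => by simp only [mem_filter] at h; simp only [mem_range]; omega)]
  refine sum_congr rfl fun t₂ ht₂ => ?_
  have hfiber : (({AB ∈ P.powerset ×ˢ Q.powerset | #AB.1 + #AB.2 ≤ t} : Finset _).filter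
      (#·.1 = t₁)).filter (#·.2 = t₂) = powersetCard t₁ P ×ˢ powersetCard t₂ Q := by
    ext ⟨A, B⟩
    simp only [mem_filter, mem_product, mem_powerset, mem_powersetCard, mem_range] at ht₁ ht₂ ⊢
    constructor
    · rintro ⟨⟨⟨⟨hA, hB⟩, -⟩, rfl⟩, rfl⟩
      exact ⟨⟨hA, rfl⟩, hB, rfl⟩
    · rintro ⟨⟨hA, rfl⟩, hB, rfl⟩
      exact ⟨⟨⟨⟨hA, hB⟩, by omega⟩, rfl⟩, rfl⟩
  rw [hfiber, sum_congr rfl (g := fun _ => a ^ t₁ * b ^ t₂), sum_const, card_product,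
    card_powersetCard, card_powersetCard, smul_eq_mul, mul_assoc, mul_assoc]
  simp only [mem_product, mem_powersetCard]
  rintro AB ⟨⟨-, rfl⟩, -, rfl⟩
  rfl

end SplitSubsets

section FlipBit

variable {L : ℕ}

def flipBit (b : Fin L → Bool) (j : Fin L) : Fin L → Bool :=
  Function.update b j (!b j)

def flips (b : Fin L → Bool) : Finset (Fin L → Bool) :=
  univ.image (flipBit b)

lemma hammingDist_flipBit (b : Fin L → Bool) (j : Fin L) : hammingDist b (flipBit b j) = 1 := by
  rw [hammingDist, card_eq_one]
  refine ⟨j, ext fun k => ?_⟩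
  by_cases hk : k = j <;> simp [flipBit, Function.update_apply, hk]

lemma flipBit_injective (b : Fin L → Bool) : Function.Injective (flipBit b) := by
  intro j j' h
  by_contra hne
  simpa [flipBit, Function.update_apply, hne] using congrFun h j

lemma card_flips (b : Fin L → Bool) : #(flips b) = L := by
  rw [flips, card_image_of_injective _ (flipBit_injective b), card_univ, Fintype.card_fin]

lemma hammingDist_of_mem_flips {b c : Fin L → Bool} (hc : c ∈ flips b) : hammingDist b c = 1 := by
  obtain ⟨j, -, rfl⟩ := mem_image.1 hc
  exact hammingDist_flipBit b j

lemma notMem_flips (b : Fin L → Bool) : b ∉ flips b := fun h => by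
  simpa using hammingDist_of_mem_flips h

lemma wt_le_wt_flipBit_add_one (b : Fin L → Bool) (j : Fin L) :
    wt b ≤ wt (flipBit b j) + 1 := by
  refine (card_le_card fun k hk => ?_).trans (card_insert_le j _)
  by_cases hkj : k = j <;> simp_all [flipBit, Function.update_apply]

lemma wt_le_wt_flipBit_of_eq_false {b : Fin L → Bool} {j : Fin L} (hj : b j = false) :
    wt b ≤ wt (flipBit b j) := by
  refine card_le_card fun k hk => ?_
  by_cases hkj : k = j <;> simp_all [flipBit, Function.update_apply]

lemma card_filter_eq_false (b : Fin L → Bool) : #{j | b j = false} = L - wt b := by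
  have := card_filter_add_card_filter_not (s := univ) (fun j => b j = true)
  simp only [Bool.not_eq_true, card_univ, Fintype.card_fin] at this
  rw [wt]; omega

lemma sub_le_card_filter_flips {w : ℕ} {b : Fin L → Bool} (hb : w ≤ wt b) :
    L - w ≤ #{c ∈ flips b | w ≤ wt c} := by
  rw [flips, filter_image, card_image_of_injective _ (flipBit_injective b)]
  rcases hb.lt_or_eq with hlt | rfl
  · rw [filter_true_of_mem fun j _ => by have := wt_le_wt_flipBit_add_one b j; simp; omega]
    simp
  · calc L - wt b = #{j | b j = false} := (card_filter_eq_false b).symm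
      _ ≤ _ := card_le_card <| monotone_filter_right _ fun j _ => wt_le_wt_flipBit_of_eq_false

end FlipBit

section Blocks

variable {m L : ℕ} {x y : Fin m → Fin L → Bool} {S : Finset (Fin m)}

lemma hammingDist_of_mem_changeOn {N : Fin m → Finset (Fin L → Bool)}
    (hN : ∀ i, N i ⊆ flips (x i)) (hy : y ∈ changeOn x N S) (i : Fin m) :
    hammingDist (x i) (y i) = if i ∈ S then 1 else 0 := by
  obtain ⟨hS, hSc⟩ := mem_changeOn.1 hy i
  by_cases hi : i ∈ S
  · rw [if_pos hi, hammingDist_of_mem_flips (hN i (hS hi))]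
  · rw [if_neg hi, hSc hi, hammingDist_self]

lemma hdist_of_mem_changeOn {N : Fin m → Finset (Fin L → Bool)}
    (hN : ∀ i, N i ⊆ flips (x i)) (hy : y ∈ changeOn x N S) : hdist x y = #S := by
  simp [hdist, hammingDist_of_mem_changeOn hN hy]

def admissibleFlips (m₀ w : ℕ) (x : Fin m → Fin L → Bool) (i : Fin m) : Finset (Fin L → Bool) :=
  if (i : ℕ) < m₀ then flips (x i) else {c ∈ flips (x i) | w ≤ wt c}

variable {m₀ w : ℕ}

lemma admissibleFlips_subset_flips (i : Fin m) : admissibleFlips m₀ w x i ⊆ flips (x i) := by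
  unfold admissibleFlips
  split_ifs
  exacts [subset_rfl, filter_subset _ _]

lemma wt_of_mem_changeOn_admissibleFlips (hx : ∀ i, w ≤ wt (x i))
    (hy : y ∈ changeOn x (admissibleFlips m₀ w x) S) (i : Fin m) :
    ((i : ℕ) < m₀ → w - 1 ≤ wt (y i)) ∧ (m₀ ≤ (i : ℕ) → w ≤ wt (y i)) := by
  obtain ⟨hS, hSc⟩ := mem_changeOn.1 hy i
  have hxi := hx i
  by_cases hi : i ∈ S
  · have hyi := hS hi
    unfold admissibleFlips at hyi
    split_ifs at hyi with hm₀
    · obtain ⟨j, -, hj⟩ := mem_image.1 hyi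
      have := wt_le_wt_flipBit_add_one (x i) j
      rw [hj] at this
      exact ⟨fun _ => by omega, fun h => absurd hm₀ (not_lt.2 h)⟩
    · exact ⟨fun h => absurd h hm₀, fun _ => (mem_filter.1 hyi).2⟩
  · rw [hSc hi]
    exact ⟨fun _ => by omega, fun _ => hxi⟩

lemma card_admissibleFlips_of_lt {i : Fin m} (hi : (i : ℕ) < m₀) :
    #(admissibleFlips m₀ w x i) = L := by
  rw [admissibleFlips, if_pos hi, card_flips]

lemma sub_le_card_admissibleFlips (hx : ∀ i, w ≤ wt (x i)) {i : Fin m} (hi : m₀ ≤ (i : ℕ)) :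
    L - w ≤ #(admissibleFlips m₀ w x i) := by
  rw [admissibleFlips, if_neg (not_lt.2 hi)]
  exact sub_le_card_filter_flips (hx i)

lemma notMem_admissibleFlips (i : Fin m) : x i ∉ admissibleFlips m₀ w x i :=
  fun h => notMem_flips _ (admissibleFlips_subset_flips i h)

lemma pow_mul_pow_le_prod_card_admissibleFlips (hx : ∀ i, w ≤ wt (x i)) {A B : Finset (Fin m)}
    (hA : ∀ i ∈ A, (i : ℕ) < m₀) (hB : ∀ i ∈ B, m₀ ≤ (i : ℕ)) :
    L ^ #A * (L - w) ^ #B ≤ ∏ i ∈ A ∪ B, #(admissibleFlips m₀ w x i) := by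
  have hAB : Disjoint A B := disjoint_left.2 fun i hiA hiB => (hA i hiA).not_ge (hB i hiB)
  rw [prod_union hAB]
  exact mul_le_mul'
    (pow_card_le_prod _ _ _ fun i hi => (card_admissibleFlips_of_lt (hA i hi)).ge)
    (pow_card_le_prod _ _ _ fun i hi => sub_le_card_admissibleFlips hx (hB i hi))

lemma weight_and_distance_of_mem_changeOn_admissibleFlips {t : ℕ} (hx : ∀ i, w ≤ wt (x i))
    (hS : #S ≤ t) (hy : y ∈ changeOn x (admissibleFlips m₀ w x) S) :
    (∀ i : Fin m, (i : ℕ) < m₀ → w - 1 ≤ wt (y i)) ∧ (∀ i : Fin m, m₀ ≤ (i : ℕ) → w ≤ wt (y i)) ∧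
      hdist x y ≤ t ∧ ∀ i, hammingDist (x i) (y i) ≤ 1 := by
  have hN : ∀ i, admissibleFlips m₀ w x i ⊆ flips (x i) := admissibleFlips_subset_flips
  refine ⟨fun i => (wt_of_mem_changeOn_admissibleFlips hx hy i).1,
    fun i => (wt_of_mem_changeOn_admissibleFlips hx hy i).2, ?_, fun i => ?_⟩
  · rwa [hdist_of_mem_changeOn hN hy]
  · rw [hammingDist_of_mem_changeOn hN hy]
    split_ifs <;> simp

end Blocks

theorem stmt_16_general (m L w t m₀ : ℕ) (hm₀ : m₀ ≤ m)
    (x : Fin m → Fin L → Bool) (hx : ∀ i, w ≤ wt (x i)) :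
    ∑ t₁ ∈ Finset.range (t + 1), ∑ t₂ ∈ Finset.range (t + 1 - t₁),
        Nat.choose m₀ t₁ * Nat.choose (m - m₀) t₂ * L ^ t₁ * (L - w) ^ t₂ ≤
      (Finset.univ.filter (fun y : Fin m → Fin L → Bool =>
        (∀ i : Fin m, (i : ℕ) < m₀ → w - 1 ≤ wt (y i)) ∧
        (∀ i : Fin m, m₀ ≤ (i : ℕ) → w ≤ wt (y i)) ∧
        hdist x y ≤ t ∧
        ∀ i, hammingDist (x i) (y i) ≤ 1)).card := by
  classical
  set R₁ : Finset (Fin m) := {i | (i : ℕ) < m₀}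
  set R₂ : Finset (Fin m) := {i | m₀ ≤ (i : ℕ)}
  have hR : Disjoint R₁ R₂ := disjoint_filter.2 fun i _ h => not_le.2 h
  have hR₁ : #R₁ = m₀ := by rw [Fin.card_filter_val_lt, min_eq_right hm₀]
  have hR₂ : #R₂ = m - m₀ := by
    rw [show R₂ = univ \ R₁ by ext; simp [R₁, R₂], card_univ_sdiff, Fintype.card_fin, hR₁]
  set pairs := {AB ∈ R₁.powerset ×ˢ R₂.powerset | #AB.1 + #AB.2 ≤ t}
  calc _ = ∑ AB ∈ pairs, L ^ #AB.1 * (L - w) ^ #AB.2 := by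
        rw [← hR₂, ← hR₁, sum_choose_mul_choose_mul_pow_mul_pow]
    _ ≤ ∑ AB ∈ pairs, ∏ i ∈ AB.1 ∪ AB.2, #(admissibleFlips m₀ w x i) := by
        refine sum_le_sum fun AB hAB => ?_
        obtain ⟨hA, hB⟩ := mem_product.1 (mem_filter.1 hAB).1
        exact pow_mul_pow_le_prod_card_admissibleFlips hx
          (fun i hi => (mem_filter.1 (mem_powerset.1 hA hi)).2)
          (fun i hi => (mem_filter.1 (mem_powerset.1 hB hi)).2)
    _ = ∑ S ∈ pairs.image fun AB => AB.1 ∪ AB.2, ∏ i ∈ S, #(admissibleFlips m₀ w x i) := by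
        rw [sum_image ((injOn_union_powerset_product hR).mono (coe_subset.2 (filter_subset _ _)))]
    _ ≤ _ := by
        refine sum_prod_card_le_card notMem_admissibleFlips fun S hS y hy => ?_
        obtain ⟨AB, hAB, rfl⟩ := mem_image.1 hS
        exact mem_filter.2 ⟨mem_univ _, weight_and_distance_of_mem_changeOn_admissibleFlips hx
          ((card_union_le _ _).trans (mem_filter.1 hAB).2) hy⟩

/-- The ball-size estimate in the proof of Proposition 13: for
`x ∈ S(m,L,w)` and `m₀ ≤ m`, the number of words `y` whose first `m₀`
subblocks have weight `≥ w-1`, whose remaining subblocks have weight `≥ w`,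
with `τ(x,y) ≤ t` and each subblock of `y` differing from the corresponding
subblock of `x` in at most one position, is at least
`Σ_{t₁+t₂≤t} C(m₀,t₁)·C(m-m₀,t₂)·L^{t₁}·(L-w)^{t₂}`. -/
theorem stmt_16 (m L w t m₀ : ℕ) (hw1 : 1 ≤ w) (hw2 : w ≤ L) (hm₀ : m₀ ≤ m)
    (x : Fin m → Fin L → Bool) (hx : ∀ i, w ≤ wt (x i)) :
    ∑ t₁ ∈ Finset.range (t + 1), ∑ t₂ ∈ Finset.range (t + 1 - t₁),
        Nat.choose m₀ t₁ * Nat.choose (m - m₀) t₂ * L ^ t₁ * (L - w) ^ t₂ ≤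
      (Finset.univ.filter (fun y : Fin m → Fin L → Bool =>
        (∀ i : Fin m, (i : ℕ) < m₀ → w - 1 ≤ wt (y i)) ∧
        (∀ i : Fin m, m₀ ≤ (i : ℕ) → w ≤ wt (y i)) ∧
        hdist x y ≤ t ∧
        ∀ i, hammingDist (x i) (y i) ≤ 1)).card :=
  stmt_16_general m L w t m₀ hm₀ x hx
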